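/- In the two-agent entropy equilibrium with prices: let traveler flows minimize Σ_k q_k(ln q_k − 1 − U_k + β_T·η_k·[k is priced]) and driver flows minimize Σ_k p_k(ln p_k − 1 − W_k − β_D·ρ_k), with demand constraints Σ_k q_k = d and Σ_k p_k = Q. If at prices η_k = ρ_k the market clears (q_k = p_k for priced modes), then the combined flows solve the single convex program minimizing (1/β_T)Σ_k q_k(ln q_k − 1 − U_k) + (1/β_D)Σ_k p_k(ln p_k − 1 − W_k) subject to both demand constraints and the clearing constraints q_k = p_k, with ρ_k recovered as the Lagrange multiplier of the clearing constraint (scaled appropriately). -/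

import Mathlib

/-!
Once prices agree and the market clears on the priced modes, the price terms of the two
agents' objectives cancel in `(1/βT) Ft + (1/βD) Fd`, which therefore coincides with the
combined objective `G` on the clearing set; separate minimality of `q` and `p` then gives
joint minimality. The multipliers come from the first-order condition of an entropy cost
on a simplex: moving mass between two modes shows that `log x_k - a_k` is the same for all
modes, and this common value, rescaled by `1/β`, is the multiplier of the demand constraint.
-/

open Real Finset Filter Topology

namespace EntropyProgram

variable {K : Type*} [Fintype K]

noncomputable def entropyCost (a x : K → ℝ) : ℝ := ∑ k, x k * (log (x k) - 1 - a k)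

lemma entropyCost_add_smul (a c x : K → ℝ) (β : ℝ) :
    entropyCost (a + β • c) x = entropyCost a x - β * ∑ k, c k * x k := by
  simp only [entropyCost, mul_sum, ← sum_sub_distrib, Pi.add_apply, Pi.smul_apply, smul_eq_mul]
  exact sum_congr rfl fun k _ => by ring

lemma hasDerivAt_mul_log_sub_one_sub (a : ℝ) {x : ℝ} (hx : x ≠ 0) :
    HasDerivAt (fun y => y * (log y - 1 - a)) (log x - a) x := by
  refine ((hasDerivAt_id' x).mul (((hasDerivAt_log hx).sub_const 1).sub_const a)).congr_deriv ?_
  rw [mul_inv_cancel₀ hx]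
  ring

lemma hasDerivAt_entropyCost_line (a q v : K → ℝ) (hq : ∀ k, q k ≠ 0) :
    HasDerivAt (fun t : ℝ => entropyCost a (q + t • v)) (∑ k, (log (q k) - a k) * v k) 0 := by
  refine HasDerivAt.fun_sum fun k _ => ?_
  have hline : HasDerivAt (fun t : ℝ => q k + t * v k) (v k) 0 := by
    simpa using ((hasDerivAt_id (0 : ℝ)).mul_const (v k)).const_add (q k)
  simpa [Function.comp_def] using
    (hasDerivAt_mul_log_sub_one_sub (a k) (hq k)).comp_of_eq 0 hline (by simp)

variable [DecidableEq K]

lemma log_sub_eq_of_entropyCost_le (a q : K → ℝ) (hq : ∀ k, 0 < q k)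
    (hmin : ∀ q', (∀ k, 0 < q' k) → ∑ k, q' k = ∑ k, q k →
      entropyCost a q ≤ entropyCost a q')
    (k j : K) : log (q k) - a k = log (q j) - a j := by
  set v : K → ℝ := Pi.single k 1 - Pi.single j 1
  have hv : ∑ i, v i = 0 := by simp [v]
  have hderiv : HasDerivAt (fun t : ℝ => entropyCost a (q + t • v))
      ((log (q k) - a k) - (log (q j) - a j)) 0 := by
    convert hasDerivAt_entropyCost_line a q v fun i => (hq i).ne' using 1
    simp [v, mul_sub, sum_sub_distrib, Pi.single_apply]
  have hpos : ∀ᶠ t in 𝓝 (0 : ℝ), ∀ i, 0 < (q + t • v) i := by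
    refine eventually_all.2 fun i => ?_
    have hcont : Tendsto (fun t : ℝ => (q + t • v) i) (𝓝 0) (𝓝 (q i)) := by
      simpa using ((continuous_id.mul continuous_const).const_add (q i)).tendsto' 0 (q i)
        (by simp)
    exact hcont.eventually_const_lt (hq i)
  have hloc : IsLocalMin (fun t : ℝ => entropyCost a (q + t • v)) 0 := by
    filter_upwards [hpos] with t ht
    simpa using hmin _ ht (by simp [sum_add_distrib, ← mul_sum, hv])
  linarith [hloc.hasDerivAt_eq_zero hderiv]

lemma exists_log_sub_eq_of_entropyCost_le (a q : K → ℝ) (hq : ∀ k, 0 < q k)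
    (hmin : ∀ q', (∀ k, 0 < q' k) → ∑ k, q' k = ∑ k, q k →
      entropyCost a q ≤ entropyCost a q') :
    ∃ c, ∀ k, log (q k) - a k = c := by
  cases isEmpty_or_nonempty K with
  | inl _ => exact ⟨0, isEmptyElim⟩
  | inr h => exact ⟨_, fun k => log_sub_eq_of_entropyCost_le a q hq hmin k h.some⟩

end EntropyProgram

open EntropyProgram

theorem combined_convex_reformulation_general
    {K : Type*} [Fintype K] [DecidableEq K] (S : Finset K)
    (βT βD : ℝ) (hβT : 0 < βT) (hβD : 0 < βD)
    (U W η ρ : K → ℝ) (d Q : ℝ)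
    (Ft : (K → ℝ) → ℝ)
    (hFt : Ft = fun q => ∑ k, q k *
      (Real.log (q k) - 1 - U k + βT * (if k ∈ S then η k else 0)))
    (Fd : (K → ℝ) → ℝ)
    (hFd : Fd = fun p => ∑ k, p k *
      (Real.log (p k) - 1 - W k - βD * (if k ∈ S then ρ k else 0)))
    (G : (K → ℝ) → (K → ℝ) → ℝ)
    (hG : G = fun q p =>
      (1 / βT) * ∑ k, q k * (Real.log (q k) - 1 - U k) +
      (1 / βD) * ∑ k, p k * (Real.log (p k) - 1 - W k))
    (q p : K → ℝ) (hqpos : ∀ k, 0 < q k) (hppos : ∀ k, 0 < p k)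
    (hqsum : ∑ k, q k = d) (hpsum : ∑ k, p k = Q)
    (hqmin : ∀ q' : K → ℝ, (∀ k, 0 < q' k) → (∑ k, q' k = d) → Ft q ≤ Ft q')
    (hpmin : ∀ p' : K → ℝ, (∀ k, 0 < p' k) → (∑ k, p' k = Q) → Fd p ≤ Fd p')
    (hprice : ∀ k ∈ S, η k = ρ k)
    (hclear : ∀ k ∈ S, q k = p k) :
    (∀ q' p' : K → ℝ, (∀ k, 0 < q' k) → (∀ k, 0 < p' k) →
        (∑ k, q' k = d) → (∑ k, p' k = Q) → (∀ k ∈ S, q' k = p' k) →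
        G q p ≤ G q' p') ∧
    ∃ μT μD : ℝ, ∀ k ∈ S,
      (1 / βT) * (Real.log (q k) - U k) + μT = -ρ k ∧
      (1 / βD) * (Real.log (p k) - W k) + μD = ρ k := by
  set πT : K → ℝ := fun k => if k ∈ S then η k else 0
  set πD : K → ℝ := fun k => if k ∈ S then ρ k else 0
  have hFt' : Ft = entropyCost (U + (-βT) • πT) := by
    rw [hFt]; funext x
    exact sum_congr rfl fun k _ => by
      simp only [πT, Pi.add_apply, Pi.smul_apply, smul_eq_mul]; ring
  have hFd' : Fd = entropyCost (W + βD • πD) := by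
    rw [hFd]; funext x
    exact sum_congr rfl fun k _ => by
      simp only [πD, Pi.add_apply, Pi.smul_apply, smul_eq_mul]; ring
  have hG' : G = fun x y => (1 / βT) * entropyCost U x + (1 / βD) * entropyCost W y := hG
  have hrevenue : ∀ x y : K → ℝ, (∀ k ∈ S, x k = y k) →
      ∑ k, πT k * x k = ∑ k, πD k * y k := fun x y h => sum_congr rfl fun k _ => by
    by_cases hk : k ∈ S <;> simp [πT, πD, hk, hprice, h]
  have hGF : ∀ x y : K → ℝ, (∀ k ∈ S, x k = y k) →
      G x y = (1 / βT) * Ft x + (1 / βD) * Fd y := by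
    intro x y h
    rw [hG', hFt', hFd', entropyCost_add_smul, entropyCost_add_smul, hrevenue x y h]
    field_simp
    ring
  constructor
  · intro q' p' hq' hp' hq'sum hp'sum hclear'
    rw [hGF q p hclear, hGF q' p' hclear']
    gcongr
    · exact hqmin q' hq' hq'sum
    · exact hpmin p' hp' hp'sum
  · obtain ⟨cT, hcT⟩ := exists_log_sub_eq_of_entropyCost_le _ q hqpos fun q' h h' =>
      hFt' ▸ hqmin q' h (h'.trans hqsum)
    obtain ⟨cD, hcD⟩ := exists_log_sub_eq_of_entropyCost_le _ p hppos fun p' h h' =>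
      hFd' ▸ hpmin p' h (h'.trans hpsum)
    refine ⟨-(cT / βT), -(cD / βD), fun k hk => ⟨?_, ?_⟩⟩
    · have hk' : log (q k) - (U k - βT * ρ k) = cT := by
        simpa [πT, hk, hprice k hk, sub_eq_add_neg] using hcT k
      field_simp
      linarith
    · have hk' : log (p k) - (W k + βD * ρ k) = cD := by simpa [πD, hk] using hcD k
      field_simp
      linarith

/-- single-OD version of Theorem 1: if traveler flows `q` solve the
traveler's entropy program with prices `η`, driver flows `p` solve the driver's
entropy program with prices `ρ`, prices agree (`η = ρ` on the priced set `S`) and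
the market clears (`q = p` on `S`), then `(q, p)` solves the combined convex program,
and `ρ` is recovered (with multipliers `μT, μD` for the demand constraints) as the
Lagrange multiplier of the clearing constraints. -/
theorem combined_convex_reformulation
    {K : Type*} [Fintype K] [DecidableEq K] [Nonempty K] (S : Finset K)
    (βT βD : ℝ) (hβT : 0 < βT) (hβD : 0 < βD)
    (U W η ρ : K → ℝ) (d Q : ℝ) (hd : 0 < d) (hQ : 0 < Q)
    (Ft : (K → ℝ) → ℝ)
    (hFt : Ft = fun q => ∑ k, q k *
      (Real.log (q k) - 1 - U k + βT * (if k ∈ S then η k else 0)))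
    (Fd : (K → ℝ) → ℝ)
    (hFd : Fd = fun p => ∑ k, p k *
      (Real.log (p k) - 1 - W k - βD * (if k ∈ S then ρ k else 0)))
    (G : (K → ℝ) → (K → ℝ) → ℝ)
    (hG : G = fun q p =>
      (1 / βT) * ∑ k, q k * (Real.log (q k) - 1 - U k) +
      (1 / βD) * ∑ k, p k * (Real.log (p k) - 1 - W k))
    (q p : K → ℝ) (hqpos : ∀ k, 0 < q k) (hppos : ∀ k, 0 < p k)
    (hqsum : ∑ k, q k = d) (hpsum : ∑ k, p k = Q)
    (hqmin : ∀ q' : K → ℝ, (∀ k, 0 < q' k) → (∑ k, q' k = d) → Ft q ≤ Ft q')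
    (hpmin : ∀ p' : K → ℝ, (∀ k, 0 < p' k) → (∑ k, p' k = Q) → Fd p ≤ Fd p')
    (hprice : ∀ k ∈ S, η k = ρ k)
    (hclear : ∀ k ∈ S, q k = p k) :
    (∀ q' p' : K → ℝ, (∀ k, 0 < q' k) → (∀ k, 0 < p' k) →
        (∑ k, q' k = d) → (∑ k, p' k = Q) → (∀ k ∈ S, q' k = p' k) →
        G q p ≤ G q' p') ∧
    ∃ μT μD : ℝ, ∀ k ∈ S,
      (1 / βT) * (Real.log (q k) - U k) + μT = -ρ k ∧
      (1 / βD) * (Real.log (p k) - W k) + μD = ρ k :=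
  combined_convex_reformulation_general S βT βD hβT hβD U W η ρ d Q Ft hFt Fd hFd G hG q p hqpos
    hppos hqsum hpsum hqmin hpmin hprice hclear
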